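/- arXiv:hep-th/0110159 — 4 statements merged into one kernel-verified Lean document; each statement's English description precedes it below -/
import Mathlib

section
/- On ℝ⁸ with coordinates adapted so that ξ⁰,...,ξ³,η⁰,...,η³ is the standard coframe, the 4-form −Ω₁+Ω₂−Ω₃ equals −(1/2)α∧α + Re β, where α := ξ⁰∧ξ¹ − ξ³∧ξ² − η⁰∧η¹ + η³∧η², and β := (ξ⁰+ξ¹i)∧(ξ³−ξ²i)∧(η⁰−η¹i)∧(η³+η²i) is a complex-valued 4-form. -/
/-!
Statement 10: on ℝ⁸ with standard coframe ξ⁰,…,ξ³,η⁰,…,η³ (modelled by the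
standard basis e 0,…,e 7 inside the exterior algebra, with ηⁱ = e (4+i)),
−Ω₁+Ω₂−Ω₃ = −(1/2)α∧α + Re β, where α and β are as in the paper.
Complex-valued forms are modelled as elements of ℂ ⊗[ℝ] (exterior algebra).
-/

open ExteriorAlgebra
open scoped TensorProduct

set_option synthInstance.maxHeartbeats 1000000
set_option maxHeartbeats 1000000

noncomputable section

/-- The standard coframe of ℝ⁸ inside its exterior algebra. -/
def e (i : Fin 8) : ExteriorAlgebra ℝ (Fin 8 → ℝ) := ι ℝ (Pi.single i 1)

/-- The real part of a complex-valued form. -/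
def reC : ℂ ⊗[ℝ] ExteriorAlgebra ℝ (Fin 8 → ℝ) →ₗ[ℝ] ExteriorAlgebra ℝ (Fin 8 → ℝ) :=
  (TensorProduct.lid ℝ (ExteriorAlgebra ℝ (Fin 8 → ℝ))).toLinearMap ∘ₗ
    TensorProduct.map Complex.reLm LinearMap.id

/-- Ω₁ = ξ⁰∧ξ¹∧ξ²∧ξ³. -/
def Ω₁ : ExteriorAlgebra ℝ (Fin 8 → ℝ) := e 0 * e 1 * e 2 * e 3

/-- Ω₃ = η⁰∧η¹∧η²∧η³. -/
def Ω₃ : ExteriorAlgebra ℝ (Fin 8 → ℝ) := e 4 * e 5 * e 6 * e 7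

/-- Ω₂, the twelve-term mixed 4-form. -/
def Ω₂ : ExteriorAlgebra ℝ (Fin 8 → ℝ) :=
    e 0 * e 1 * e 4 * e 5 + e 0 * e 1 * e 6 * e 7
  + e 2 * e 3 * e 4 * e 5 + e 2 * e 3 * e 6 * e 7
  + e 0 * e 2 * e 4 * e 6 - e 0 * e 2 * e 5 * e 7
  - e 1 * e 3 * e 4 * e 6 + e 1 * e 3 * e 5 * e 7
  + e 0 * e 3 * e 4 * e 7 + e 0 * e 3 * e 5 * e 6
  + e 1 * e 2 * e 4 * e 7 + e 1 * e 2 * e 5 * e 6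

/-- α = ξ⁰∧ξ¹ − ξ³∧ξ² − η⁰∧η¹ + η³∧η². -/
def α : ExteriorAlgebra ℝ (Fin 8 → ℝ) := e 0 * e 1 - e 3 * e 2 - e 4 * e 5 + e 7 * e 6

/-- β = (ξ⁰+ξ¹i)∧(ξ³−ξ²i)∧(η⁰−η¹i)∧(η³+η²i), a complex-valued 4-form. -/
def β : ℂ ⊗[ℝ] ExteriorAlgebra ℝ (Fin 8 → ℝ) :=
  ((1 : ℂ) ⊗ₜ e 0 + Complex.I ⊗ₜ e 1) * ((1 : ℂ) ⊗ₜ e 3 - Complex.I ⊗ₜ e 2) *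
    ((1 : ℂ) ⊗ₜ e 4 - Complex.I ⊗ₜ e 5) * ((1 : ℂ) ⊗ₜ e 7 + Complex.I ⊗ₜ e 6)

/-!
Write α = σ − τ with σ = ξ⁰∧ξ¹ + ξ²∧ξ³ and τ = η⁰∧η¹ + η²∧η³. Products of two 1-forms
commute with each other and square to zero, so σ∧σ = 2Ω₁, τ∧τ = 2Ω₃ and
−½ α∧α = −Ω₁ + σ∧τ − Ω₃, where σ∧τ is the sum of the first four terms of Ω₂.
Expanding β, the terms with an even number of factors i are, with their signs, exactly the
remaining eight terms of Ω₂.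
-/

namespace ExteriorAlgebra

variable {R M : Type*} [CommRing R] [AddCommGroup M] [Module R M]

theorem ι_mul_ι_comm (x y : M) : ι R x * ι R y = -(ι R y * ι R x) :=
  eq_neg_of_add_eq_zero_left (ι_add_mul_swap x y)

theorem commute_ι_mul_ι_ι (x y z : M) : Commute (ι R x * ι R y) (ι R z) := by
  rw [Commute, SemiconjBy, mul_assoc, ι_mul_ι_comm y z, mul_neg, ← mul_assoc, ι_mul_ι_comm x z,
    neg_mul, neg_neg, mul_assoc]

theorem commute_ι_mul_ι (w x y z : M) : Commute (ι R w * ι R x) (ι R y * ι R z) :=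
  (commute_ι_mul_ι_ι w x y).mul_right (commute_ι_mul_ι_ι w x z)

theorem ι_mul_ι_sq (x y : M) : (ι R x * ι R y) ^ 2 = 0 := by
  rw [sq, ← mul_assoc, (commute_ι_mul_ι_ι x y x).eq, ← mul_assoc, ι_sq_zero, zero_mul, zero_mul]

end ExteriorAlgebra

theorem Commute.add_sq_of_sq_eq_zero {R : Type*} [Semiring R] {a b : R} (h : Commute a b)
    (ha : a ^ 2 = 0) (hb : b ^ 2 = 0) : (a + b) ^ 2 = 2 * a * b := by
  rw [h.add_sq, ha, hb, zero_add, add_zero]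

lemma reC_tmul (c : ℂ) (x : ExteriorAlgebra ℝ (Fin 8 → ℝ)) : reC (c ⊗ₜ x) = c.re • x := rfl

lemma e_mul_e_comm (i j : Fin 8) : e i * e j = -(e j * e i) := ι_mul_ι_comm _ _

lemma α_eq_sub : α = (e 0 * e 1 + e 2 * e 3) - (e 4 * e 5 + e 6 * e 7) := by
  rw [α, e_mul_e_comm 3 2, e_mul_e_comm 7 6]
  abel

lemma half_smul_α_mul_α :
    (1 / 2 : ℝ) • (α * α) = e 0 * e 1 * (e 2 * e 3)
      - (e 0 * e 1 + e 2 * e 3) * (e 4 * e 5 + e 6 * e 7) + e 4 * e 5 * (e 6 * e 7) := by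
  have hσ : (e 0 * e 1 + e 2 * e 3) ^ 2 = 2 * (e 0 * e 1) * (e 2 * e 3) :=
    (commute_ι_mul_ι _ _ _ _).add_sq_of_sq_eq_zero (ι_mul_ι_sq _ _) (ι_mul_ι_sq _ _)
  have hτ : (e 4 * e 5 + e 6 * e 7) ^ 2 = 2 * (e 4 * e 5) * (e 6 * e 7) :=
    (commute_ι_mul_ι _ _ _ _).add_sq_of_sq_eq_zero (ι_mul_ι_sq _ _) (ι_mul_ι_sq _ _)
  have hστ : Commute (e 0 * e 1 + e 2 * e 3) (e 4 * e 5 + e 6 * e 7) :=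
    ((commute_ι_mul_ι _ _ _ _).add_right (commute_ι_mul_ι _ _ _ _)).add_left
      ((commute_ι_mul_ι _ _ _ _).add_right (commute_ι_mul_ι _ _ _ _))
  rw [← sq, α_eq_sub, hστ.sub_sq, hσ, hτ]
  simp only [two_mul, add_mul, mul_add, mul_assoc]
  module

lemma reC_β : reC β =
    e 0 * e 2 * e 4 * e 6 - e 0 * e 2 * e 5 * e 7 - e 1 * e 3 * e 4 * e 6 + e 1 * e 3 * e 5 * e 7
      + e 0 * e 3 * e 4 * e 7 + e 0 * e 3 * e 5 * e 6
      + e 1 * e 2 * e 4 * e 7 + e 1 * e 2 * e 5 * e 6 := by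
  simp only [β, mul_add, add_mul, mul_sub, sub_mul, Algebra.TensorProduct.tmul_mul_tmul,
    one_mul, mul_one, Complex.I_mul_I, neg_mul, neg_neg, map_add, map_sub, reC_tmul,
    Complex.one_re, Complex.I_re, Complex.neg_re, one_smul, neg_smul, zero_smul]
  module

theorem cayley_form_su4_decomposition :
    -Ω₁ + Ω₂ - Ω₃ = -((1 / 2 : ℝ) • (α * α)) + reC β := by
  rw [half_smul_α_mul_α, reC_β]
  simp only [Ω₁, Ω₂, Ω₃, mul_add, add_mul, mul_assoc]
  abel
end
end

section
/- The functions φ(r) = (1+r²)^{3/5}·f and ψ(r) = (4/5)(1+r²)^{-2/5} (with f > 0 constant in r) satisfy the system of ordinary differential equations ∂(φ²)/∂r = 3 r f φ ψ and ∂(φψ)/∂r = (r/2) f ψ²; moreover the general solution with f > 0 is φ = (1/h₁)(h₁ r² + h₂)^{3/5} f, ψ = (4/5)(h₁ r² + h₂)^{-2/5} for constants h₁ > 0, h₂ > 0. -/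
/-!
Writing `u = φ²` and `v = φψ`, the system reads `u' = 3 r f v`, `v' = (r / 2) f v² / u`, and
`v u^(-1/6) = ψ φ^(2/3)` is a first integral, with value `c` say. Then
`(u^(5/6))' = (5/2) r f c`, so `u^(5/6) = E(r) := (5/4) f c r² + d`, which gives `φ = E^(3/5)` and
`ψ = c E^(-2/5)`. Multiplying `E` by the positive constant `k` with `(4/5) k^(-2/5) = c` puts the
solution in the stated form.
-/

open Real

lemma eq_of_hasDerivAt_zero_of_le {g : ℝ → ℝ} {a x : ℝ} (hg : ∀ y, a ≤ y → HasDerivAt g 0 y)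
    (hx : a ≤ x) : g x = g a :=
  constant_of_has_deriv_right_zero (fun y hy => (hg y hy.1).continuousAt.continuousWithinAt)
    (fun y hy => (hg y hy.1).hasDerivWithinAt) x ⟨hx, le_rfl⟩

lemma sq_rpow_of_nonneg {x : ℝ} (hx : 0 ≤ x) (p : ℝ) : (x ^ 2) ^ p = x ^ (2 * p) := by
  exact_mod_cast (rpow_natCast_mul hx 2 p).symm

lemma hasDerivAt_quadratic_rpow {a b r : ℝ} (p : ℝ) (h : 0 < a * r ^ 2 + b) :
    HasDerivAt (fun s => (a * s ^ 2 + b) ^ p) (2 * a * r * p * (a * r ^ 2 + b) ^ (p - 1)) r := by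
  have hquad : HasDerivAt (fun s => a * s ^ 2 + b) (2 * a * r) r := by
    simpa [mul_comm, mul_left_comm] using ((hasDerivAt_pow 2 r).const_mul a).add_const b
  exact hquad.rpow_const (Or.inl h.ne')

lemma eq_rpow_of_mul_mul_sq_rpow_eq {x y c E : ℝ} (hx : 0 < x)
    (hc : x * y * (x ^ 2) ^ (-(1 : ℝ) / 6) = c) (hE : (x ^ 2) ^ ((5 : ℝ) / 6) = E) :
    x = E ^ ((3 : ℝ) / 5) ∧ y = c * E ^ (-(2 : ℝ) / 5) := by
  subst hc hE
  simp only [sq_rpow_of_nonneg hx.le, ← rpow_mul hx.le]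
  constructor
  · norm_num
  · rw [mul_assoc, ← rpow_add hx]
    norm_num [rpow_neg_one]
    field_simp

lemma exists_rescaling {f c d : ℝ} (hf : 0 < f) (hc : 0 < c) (hd : 0 < d) :
    ∃ h₁ h₂ : ℝ, 0 < h₁ ∧ 0 < h₂ ∧ ∀ r : ℝ,
      (5 / 4 * f * c * r ^ 2 + d) ^ ((3 : ℝ) / 5) =
          1 / h₁ * (h₁ * r ^ 2 + h₂) ^ ((3 : ℝ) / 5) * f ∧
        c * (5 / 4 * f * c * r ^ 2 + d) ^ (-(2 : ℝ) / 5) =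
          4 / 5 * (h₁ * r ^ 2 + h₂) ^ (-(2 : ℝ) / 5) := by
  set k := (5 * c / 4) ^ (-(5 : ℝ) / 2)
  have hk : 0 < k := by positivity
  have hk_two_fifths : k ^ (-(2 : ℝ) / 5) = 5 * c / 4 := by
    rw [← rpow_mul (by positivity)]; norm_num
  have hk_three_fifths : k ^ ((3 : ℝ) / 5) = k * (5 * c / 4) := by
    rw [← hk_two_fifths, ← rpow_one_add' hk.le (by norm_num)]; norm_num
  refine ⟨k * (5 / 4 * f * c), k * d, by positivity, by positivity, fun r => ?_⟩
  have hE : 0 ≤ 5 / 4 * f * c * r ^ 2 + d := by positivity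
  rw [show k * (5 / 4 * f * c) * r ^ 2 + k * d = k * (5 / 4 * f * c * r ^ 2 + d) by ring,
    mul_rpow hk.le hE, mul_rpow hk.le hE, hk_two_fifths, hk_three_fifths]
  exact ⟨by field_simp, by ring⟩

def SolvesBryantSalamon (f : ℝ) (φ ψ : ℝ → ℝ) : Prop :=
  ∀ r, 0 ≤ r → HasDerivAt (fun s => φ s ^ 2) (3 * r * f * φ r * ψ r) r ∧
    HasDerivAt (fun s => φ s * ψ s) (r / 2 * f * ψ r ^ 2) r

theorem solvesBryantSalamon_family (f : ℝ) {h₁ h₂ : ℝ} (h₁_pos : 0 < h₁) (h₂_pos : 0 < h₂) :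
    SolvesBryantSalamon f (fun s => 1 / h₁ * (h₁ * s ^ 2 + h₂) ^ ((3 : ℝ) / 5) * f)
      (fun s => 4 / 5 * (h₁ * s ^ 2 + h₂) ^ (-(2 : ℝ) / 5)) := by
  intro r _
  have hE : 0 < h₁ * r ^ 2 + h₂ := by positivity
  have h₁_ne : h₁ ≠ 0 := h₁_pos.ne'
  have hφ := (hasDerivAt_quadratic_rpow ((3 : ℝ) / 5) hE).const_mul (1 / h₁) |>.mul_const f
  have hψ := (hasDerivAt_quadratic_rpow (-(2 : ℝ) / 5) hE).const_mul (4 / 5 : ℝ)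
  refine ⟨(hφ.fun_pow 2).congr_deriv ?_, (hφ.fun_mul hψ).congr_deriv ?_⟩
  all_goals
    beta_reduce
    simp only [show (3 : ℝ) / 5 - 1 = -(2 : ℝ) / 5 by norm_num,
      show -(2 : ℝ) / 5 - 1 = -(7 : ℝ) / 5 by norm_num]
    set E := h₁ * r ^ 2 + h₂
  · norm_num
    field_simp
    ring
  · have hexp :
        E ^ ((3 : ℝ) / 5) * E ^ (-(7 : ℝ) / 5) = E ^ (-(2 : ℝ) / 5) * E ^ (-(2 : ℝ) / 5) := by
      rw [← rpow_add hE, ← rpow_add hE]; norm_num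
    field_simp
    simp only [neg_div] at hexp ⊢
    linear_combination (-8 * r * f) * hexp

/-- For `φ > 0` this is `ψ φ^(2/3)`; it is written through `φ²`, the only power of `φ` known
to be differentiable. -/
noncomputable def firstIntegral (φ ψ : ℝ → ℝ) (r : ℝ) : ℝ :=
  φ r * ψ r * (φ r ^ 2) ^ (-(1 : ℝ) / 6)

namespace SolvesBryantSalamon

variable {f : ℝ} {φ ψ : ℝ → ℝ}

lemma hasDerivAt_firstIntegral (hsol : SolvesBryantSalamon f φ ψ) {r : ℝ} (hr : 0 ≤ r)
    (hφ : 0 < φ r) : HasDerivAt (firstIntegral φ ψ) 0 r := by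
  obtain ⟨hsq, hmul⟩ := hsol r hr
  have hsq_ne : φ r ^ 2 ≠ 0 := by positivity
  refine (hmul.mul (hsq.rpow_const (p := -(1 : ℝ) / 6) (Or.inl hsq_ne))).congr_deriv ?_
  rw [rpow_sub_one hsq_ne]
  field_simp
  ring

lemma firstIntegral_eq (hsol : SolvesBryantSalamon f φ ψ) (hφ : ∀ r, 0 ≤ r → 0 < φ r) {r : ℝ}
    (hr : 0 ≤ r) : firstIntegral φ ψ r = firstIntegral φ ψ 0 :=
  eq_of_hasDerivAt_zero_of_le (fun s hs => hsol.hasDerivAt_firstIntegral hs (hφ s hs)) hr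

lemma sq_rpow_eq (hsol : SolvesBryantSalamon f φ ψ) (hφ : ∀ r, 0 ≤ r → 0 < φ r) {r : ℝ}
    (hr : 0 ≤ r) : (φ r ^ 2) ^ ((5 : ℝ) / 6) =
      5 / 4 * f * firstIntegral φ ψ 0 * r ^ 2 + (φ 0 ^ 2) ^ ((5 : ℝ) / 6) := by
  have hderiv : ∀ s, 0 ≤ s → HasDerivAt
      (fun s => (φ s ^ 2) ^ ((5 : ℝ) / 6) - 5 / 4 * f * firstIntegral φ ψ 0 * s ^ 2) 0 s := by
    intro s hs
    have hsq_ne : φ s ^ 2 ≠ 0 := by have := hφ s hs; positivity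
    have hpow := (hsol s hs).1.rpow_const (p := (5 : ℝ) / 6) (Or.inl hsq_ne)
    have hquad := (hasDerivAt_pow 2 s).const_mul (5 / 4 * f * firstIntegral φ ψ 0)
    refine (hpow.sub hquad).congr_deriv ?_
    rw [← hsol.firstIntegral_eq hφ hs, firstIntegral,
      show (5 : ℝ) / 6 - 1 = -(1 : ℝ) / 6 by norm_num]
    ring
  linear_combination eq_of_hasDerivAt_zero_of_le hderiv hr

lemma exists_eq (hf : 0 < f) (hsol : SolvesBryantSalamon f φ ψ) (hφ : ∀ r, 0 ≤ r → 0 < φ r)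
    (hψ : 0 < ψ 0) :
    ∃ h₁ h₂ : ℝ, 0 < h₁ ∧ 0 < h₂ ∧ ∀ r, 0 ≤ r →
      φ r = 1 / h₁ * (h₁ * r ^ 2 + h₂) ^ ((3 : ℝ) / 5) * f ∧
      ψ r = 4 / 5 * (h₁ * r ^ 2 + h₂) ^ (-(2 : ℝ) / 5) := by
  have hφ₀ := hφ 0 le_rfl
  have hc : 0 < firstIntegral φ ψ 0 := by unfold firstIntegral; positivity
  obtain ⟨h₁, h₂, h₁_pos, h₂_pos, hrescale⟩ :=
    exists_rescaling hf hc (by positivity : 0 < (φ 0 ^ 2) ^ ((5 : ℝ) / 6))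
  refine ⟨h₁, h₂, h₁_pos, h₂_pos, fun r hr => ?_⟩
  obtain ⟨hφr, hψr⟩ := eq_rpow_of_mul_mul_sq_rpow_eq (hφ r hr)
    (hsol.firstIntegral_eq hφ hr) (hsol.sq_rpow_eq hφ hr)
  rw [hφr, hψr]
  exact hrescale r

end SolvesBryantSalamon

theorem bryant_salamon_ode (f : ℝ) (hf : 0 < f) :
    (∀ r : ℝ, 0 ≤ r →
      HasDerivAt (fun s : ℝ => ((1 + s ^ 2) ^ ((3 : ℝ) / 5) * f) ^ 2)
        (3 * r * f * ((1 + r ^ 2) ^ ((3 : ℝ) / 5) * f) *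
          (4 / 5 * (1 + r ^ 2) ^ (-(2 : ℝ) / 5))) r ∧
      HasDerivAt (fun s : ℝ =>
          ((1 + s ^ 2) ^ ((3 : ℝ) / 5) * f) * (4 / 5 * (1 + s ^ 2) ^ (-(2 : ℝ) / 5)))
        (r / 2 * f * (4 / 5 * (1 + r ^ 2) ^ (-(2 : ℝ) / 5)) ^ 2) r) ∧
    (∀ φ ψ : ℝ → ℝ,
      (∀ r, 0 ≤ r → 0 < φ r ∧ 0 < ψ r) →
      (∀ r, 0 ≤ r → HasDerivAt (fun s => φ s ^ 2) (3 * r * f * φ r * ψ r) r) →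
      (∀ r, 0 ≤ r → HasDerivAt (fun s => φ s * ψ s) (r / 2 * f * ψ r ^ 2) r) →
      ∃ h₁ h₂ : ℝ, 0 < h₁ ∧ 0 < h₂ ∧ ∀ r, 0 ≤ r →
        φ r = 1 / h₁ * (h₁ * r ^ 2 + h₂) ^ ((3 : ℝ) / 5) * f ∧
        ψ r = 4 / 5 * (h₁ * r ^ 2 + h₂) ^ (-(2 : ℝ) / 5)) := by
  refine ⟨fun r hr => ?_, fun φ ψ hpos hsq hmul => ?_⟩
  · simpa only [div_one, one_mul, add_comm _ (1 : ℝ)] using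
      solvesBryantSalamon_family f one_pos one_pos r hr
  · exact SolvesBryantSalamon.exists_eq hf (fun r hr => ⟨hsq r hr, hmul r hr⟩)
      (fun r hr => (hpos r hr).1) (hpos 0 le_rfl).2
end

section
/- On ℝ⁴ ≅ ℍ with quaternionic coordinate x, the 1-form A = Im(x dx̄/(1+|x|²)) with values in the imaginary quaternions has curvature F = dA + A∧A = dx∧dx̄/(1+|x|²)², and this curvature is self-dual with respect to the standard Euclidean metric and orientation. -/
/-!
Statement 17: on ℝ⁴ ≅ ℍ the 1-form A = Im(x dx̄/(1+|x|²)) has curvature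
F = dA + A∧A = dx∧dx̄/(1+|x|²)², and F is self-dual.

A 1-form is a map assigning to x and a tangent vector u a quaternion; here
A x u = (1+‖x‖²)⁻¹ Im(x·ū), dx∧dx̄ evaluated on (u,v) is u·v̄ − v·ū, the
exterior derivative is computed with fderiv, (A∧A)(u,v) = A(u)A(v) − A(v)A(u),
and self-duality is the condition F(1,i) = F(j,k), F(1,j) = F(k,i),
F(1,k) = F(i,j) on the standard oriented orthonormal basis 1,i,j,k of ℍ.
-/

open Quaternion
open scoped Quaternion

noncomputable section

def qi : ℍ[ℝ] := ⟨0, 1, 0, 0⟩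
def qj : ℍ[ℝ] := ⟨0, 0, 1, 0⟩
def qk : ℍ[ℝ] := ⟨0, 0, 0, 1⟩

/-- The basic instanton 1-form A = Im(x dx̄/(1+|x|²)). -/
def A (x u : ℍ[ℝ]) : ℍ[ℝ] := (1 + ‖x‖ ^ 2)⁻¹ • (x * star u).im

/-- The curvature F = dA + A∧A of a 1-form A', evaluated on tangent vectors u, v. -/
def curv (A' : ℍ[ℝ] → ℍ[ℝ] → ℍ[ℝ]) (x u v : ℍ[ℝ]) : ℍ[ℝ] :=
  fderiv ℝ (fun y => A' y v) x u - fderiv ℝ (fun y => A' y u) x v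
    + (A' x u * A' x v - A' x v * A' x u)

/-!
Write `A y v = ρ y • Im (y v̄)` with `ρ y = (1 + ‖y‖²)⁻¹`. In `dA(u, v)` the terms where `ρ` is not
differentiated give `ρ (u v̄ - v ū)`. With `a = x ū`, `b = x v̄`, the remaining terms of `dA` and
all of `A ∧ A` add up to `ρ² (2 Re b Im a - 2 Re a Im b + [Im a, Im b]) = -ρ² (ā b - b̄ a)`, and
`ā b = u x̄ x v̄ = ‖x‖² u v̄`. Since `ρ - ρ² ‖x‖² = ρ²`, this gives `F = ρ² (u v̄ - v ū)`, and
self-duality of `F` reduces to the multiplication table `j k = i`, `k i = j`, `i j = k`.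
-/

lemma hasFDerivAt_inv_one_add_norm_sq {E : Type*} [NormedAddCommGroup E] [InnerProductSpace ℝ E]
    (x : E) :
    HasFDerivAt (fun y : E => (1 + ‖y‖ ^ 2)⁻¹) (-(2 * ((1 + ‖x‖ ^ 2) ^ 2)⁻¹) • innerSL ℝ x) x := by
  refine ((hasFDerivAt_inv (by positivity)).comp x
    ((hasFDerivAt_id x).norm_sq.const_add 1)).congr_fderiv ?_
  ext u
  simp
  ring

def imMulStarCLM (v : ℍ[ℝ]) : ℍ[ℝ] →L[ℝ] ℍ[ℝ] :=
  LinearMap.toContinuousLinearMap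
    { toFun := fun y => (y * star v).im
      map_add' := fun a b => by rw [add_mul, im_add]
      map_smul' := fun c a => by rw [smul_mul_assoc, im_smul]; rfl }

lemma fderiv_A_apply (x u v : ℍ[ℝ]) :
    fderiv ℝ (fun y => A y v) x u =
      (1 + ‖x‖ ^ 2)⁻¹ • (u * star v).im
        - (2 * ((1 + ‖x‖ ^ 2) ^ 2)⁻¹ * (x * star u).re) • (x * star v).im := by
  have h : HasFDerivAt (fun y => A y v) _ x :=
    (hasFDerivAt_inv_one_add_norm_sq x).fun_smul (imMulStarCLM v).hasFDerivAt
  rw [h.fderiv]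
  simp [imMulStarCLM, inner_def, sub_eq_add_neg]

lemma star_mul_sub_star_mul {R : Type*} [CommRing R] (a b : ℍ[R]) :
    star a * b - star b * a =
      (2 * a.re) • b.im - (2 * b.re) • a.im - (a.im * b.im - b.im * a.im) := by
  ext <;> simp [re_mul, imI_mul, imJ_mul, imK_mul] <;> ring

lemma star_mul_star_mul_mul_star {R : Type*} [CommRing R] (x u v : ℍ[R]) :
    star (x * star u) * (x * star v) = normSq x • (u * star v) := by
  rw [star_mul, star_star, mul_assoc, ← mul_assoc (star x), star_mul_self, ← mul_assoc,
    ← coe_commutes, mul_assoc, coe_mul_eq_smul]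

lemma im_sub_im_star {R : Type*} [CommRing R] (p : ℍ[R]) : p.im - (star p).im = p - star p := by
  ext <;> simp

lemma curv_A (x u v : ℍ[ℝ]) :
    curv A x u v = ((1 + ‖x‖ ^ 2) ^ 2)⁻¹ • (u * star v - v * star u) := by
  have him_sub : (u * star v).im - (v * star u).im = u * star v - v * star u := by
    rw [← star_mul_star u v, im_sub_im_star]
  have hnormSq_smul : (‖x‖ ^ 2) • (u * star v - v * star u) =
      star (x * star u) * (x * star v) - star (x * star v) * (x * star u) := by
    rw [smul_sub, star_mul_star_mul_mul_star, star_mul_star_mul_mul_star,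
      normSq_eq_norm_mul_self, sq]
  rw [star_mul_sub_star_mul] at hnormSq_smul
  rw [curv, fderiv_A_apply, fderiv_A_apply]
  simp only [A, smul_mul_smul_comm]
  linear_combination (norm := skip)
    (1 + ‖x‖ ^ 2)⁻¹ • him_sub + ((1 + ‖x‖ ^ 2) ^ 2)⁻¹ • hnormSq_smul
  match_scalars <;> field_simp <;> ring

lemma mul_star_sub_mul_star_selfDual :
    (1 * star qi - qi * star 1 = qj * star qk - qk * star qj) ∧
    (1 * star qj - qj * star 1 = qk * star qi - qi * star qk) ∧
    (1 * star qk - qk * star 1 = qi * star qj - qj * star qi) := by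
  refine ⟨?_, ?_, ?_⟩ <;> ext <;> simp [re_mul, imI_mul, imJ_mul, imK_mul] <;> simp [qi, qj, qk]

theorem basic_instanton_curvature_selfdual :
    (∀ x u v : ℍ[ℝ],
      curv A x u v = ((1 + ‖x‖ ^ 2) ^ 2)⁻¹ • (u * star v - v * star u)) ∧
    (∀ x : ℍ[ℝ],
      curv A x 1 qi = curv A x qj qk ∧
      curv A x 1 qj = curv A x qk qi ∧
      curv A x 1 qk = curv A x qi qj) := by
  obtain ⟨hi, hj, hk⟩ := mul_star_sub_mul_star_selfDual
  exact ⟨curv_A, fun x => by simp only [curv_A, hi, hj, hk, and_self]⟩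
end
end

section
/- The total Yang–Mills action of the instanton with curvature F_{λ,b} = λ² dx∧dx̄/(λ²+|x−b|²)² over ℝ⁴ is finite and independent of λ > 0 and b ∈ ℍ; explicitly ∫_{ℝ⁴} |F_{λ,b}|² dvol = 48·∫_{ℝ⁴} λ⁴/(λ²+|x−b|²)⁴ dx, and the integral ∫_{ℝ⁴} λ⁴/(λ²+|x−b|²)⁴ dx = π²/6 for every λ > 0, b ∈ ℍ. -/
/-!
In polar coordinates the integral of a radial function over a 4-dimensional inner product space
is `4 · vol(B(0,1)) · ∫₀^∞ r³ f(r) dr` with `vol(B(0,1)) = π²/2`. For `f(r) = λ⁴/(λ² + r²)⁴` the radial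
integrand has the explicit primitive `λ⁶/(6(λ² + r²)³) − λ⁴/(4(λ² + r²)²)`, which vanishes at
infinity and equals `−1/12` at `0`, so the integral is `2π² · 1/12 = π²/6` whatever `λ ≠ 0`; the
centre `b` drops out by translation invariance of Lebesgue measure, and `|F|² = 48 λ⁴/(λ² + r²)⁴`
pointwise.
-/

open MeasureTheory Set Filter Topology Module

section Radial

variable {lam : ℝ}

lemma hasDerivAt_instanton_radial_primitive (hlam : lam ≠ 0) (y : ℝ) :
    HasDerivAt
      (fun y : ℝ => lam ^ 6 / (6 * (lam ^ 2 + y ^ 2) ^ 3) - lam ^ 4 / (4 * (lam ^ 2 + y ^ 2) ^ 2))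
      (y ^ 3 * (lam ^ 4 / (lam ^ 2 + y ^ 2) ^ 4)) y := by
  have hD : lam ^ 2 + y ^ 2 ≠ 0 := by positivity
  have hd : HasDerivAt (fun y : ℝ => lam ^ 2 + y ^ 2) (2 * y) y := by
    simpa using (hasDerivAt_pow 2 y).const_add (lam ^ 2)
  refine (((hasDerivAt_const y (lam ^ 6)).div ((hd.pow 3).const_mul 6) (by simp [hD])).sub
    ((hasDerivAt_const y (lam ^ 4)).div ((hd.pow 2).const_mul 4) (by simp [hD]))).congr_deriv ?_
  simp only [Pi.pow_apply]
  field_simp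
  ring

lemma tendsto_instanton_radial_primitive_atTop (lam : ℝ) :
    Tendsto
      (fun y : ℝ => lam ^ 6 / (6 * (lam ^ 2 + y ^ 2) ^ 3) - lam ^ 4 / (4 * (lam ^ 2 + y ^ 2) ^ 2))
      atTop (𝓝 0) := by
  have hD : Tendsto (fun y : ℝ => lam ^ 2 + y ^ 2) atTop atTop :=
    tendsto_atTop_add_const_left _ _ (tendsto_pow_atTop two_ne_zero)
  have h₃ := (tendsto_const_nhds (x := lam ^ 6)).div_atTop
    (((tendsto_pow_atTop three_ne_zero).comp hD).const_mul_atTop (by norm_num : (0 : ℝ) < 6))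
  have h₂ := (tendsto_const_nhds (x := lam ^ 4)).div_atTop
    (((tendsto_pow_atTop two_ne_zero).comp hD).const_mul_atTop (by norm_num : (0 : ℝ) < 4))
  simpa using h₃.sub h₂

lemma instanton_radial_integrand_nonneg (lam : ℝ) {y : ℝ} (hy : y ∈ Ioi 0) :
    0 ≤ y ^ 3 * (lam ^ 4 / (lam ^ 2 + y ^ 2) ^ 4) := by
  have : 0 ≤ y := le_of_lt hy
  positivity

lemma integrableOn_instanton_radial (hlam : lam ≠ 0) :
    IntegrableOn (fun y : ℝ => y ^ 3 * (lam ^ 4 / (lam ^ 2 + y ^ 2) ^ 4)) (Ioi 0) :=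
  integrableOn_Ioi_deriv_of_nonneg' (fun y _ => hasDerivAt_instanton_radial_primitive hlam y)
    (fun _ => instanton_radial_integrand_nonneg lam) (tendsto_instanton_radial_primitive_atTop lam)

lemma integral_instanton_radial (hlam : lam ≠ 0) :
    ∫ y in Ioi (0 : ℝ), y ^ 3 * (lam ^ 4 / (lam ^ 2 + y ^ 2) ^ 4) = 1 / 12 := by
  rw [integral_Ioi_of_hasDerivAt_of_nonneg'
    (fun y _ => hasDerivAt_instanton_radial_primitive hlam y)
    (fun _ => instanton_radial_integrand_nonneg lam) (tendsto_instanton_radial_primitive_atTop lam)]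
  field_simp
  ring

end Radial

variable {E : Type*} [NormedAddCommGroup E] [InnerProductSpace ℝ E] [FiniteDimensional ℝ E]
  [MeasurableSpace E] [BorelSpace E]

lemma measureReal_ball_of_finrank_eq_four (hE : finrank ℝ E = 4) (x : E) {r : ℝ} (hr : 0 ≤ r) :
    volume.real (Metric.ball x r) = Real.pi ^ 2 / 2 * r ^ 4 := by
  have : Nontrivial E := Module.nontrivial_of_finrank_pos (R := ℝ) (by omega)
  rw [measureReal_def, InnerProductSpace.volume_ball_of_dim_even (k := 2) hE, hE,
    ENNReal.toReal_mul, ENNReal.toReal_pow, ENNReal.toReal_ofReal hr,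
    ENNReal.toReal_ofReal (by positivity)]
  norm_num
  ring

lemma integrable_instanton_density (hE : finrank ℝ E = 4) {lam : ℝ} (hlam : lam ≠ 0) (b : E) :
    Integrable (fun x : E => lam ^ 4 / (lam ^ 2 + ‖x - b‖ ^ 2) ^ 4) := by
  have : Nontrivial E := Module.nontrivial_of_finrank_pos (R := ℝ) (by omega)
  refine Integrable.comp_sub_right (f := fun x : E => lam ^ 4 / (lam ^ 2 + ‖x‖ ^ 2) ^ 4) ?_ b
  rw [integrable_fun_norm_addHaar volume (f := fun r => lam ^ 4 / (lam ^ 2 + r ^ 2) ^ 4), hE]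
  exact integrableOn_instanton_radial hlam

lemma integral_instanton_density (hE : finrank ℝ E = 4) {lam : ℝ} (hlam : lam ≠ 0) (b : E) :
    ∫ x : E, lam ^ 4 / (lam ^ 2 + ‖x - b‖ ^ 2) ^ 4 = Real.pi ^ 2 / 6 := by
  have : Nontrivial E := Module.nontrivial_of_finrank_pos (R := ℝ) (by omega)
  rw [integral_sub_right_eq_self (fun x : E => lam ^ 4 / (lam ^ 2 + ‖x‖ ^ 2) ^ 4) b,
    integral_fun_norm_addHaar volume (fun r => lam ^ 4 / (lam ^ 2 + r ^ 2) ^ 4), hE,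
    measureReal_ball_of_finrank_eq_four hE 0 zero_le_one]
  simp only [smul_eq_mul, nsmul_eq_mul]
  rw [integral_instanton_radial hlam]
  ring

theorem instanton_action_one (lam : ℝ) (hlam : 0 < lam) (b : EuclideanSpace ℝ (Fin 4)) :
    Integrable (fun x : EuclideanSpace ℝ (Fin 4) =>
      lam ^ 4 / (lam ^ 2 + ‖x - b‖ ^ 2) ^ 4) ∧
    (∫ x : EuclideanSpace ℝ (Fin 4),
        3 * (4 * lam ^ 2 / (lam ^ 2 + ‖x - b‖ ^ 2) ^ 2) ^ 2) =
      48 * ∫ x : EuclideanSpace ℝ (Fin 4), lam ^ 4 / (lam ^ 2 + ‖x - b‖ ^ 2) ^ 4 ∧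
    (∫ x : EuclideanSpace ℝ (Fin 4), lam ^ 4 / (lam ^ 2 + ‖x - b‖ ^ 2) ^ 4) =
      Real.pi ^ 2 / 6 := by
  have hE : finrank ℝ (EuclideanSpace ℝ (Fin 4)) = 4 := finrank_euclideanSpace_fin
  refine ⟨integrable_instanton_density hE hlam.ne' b, ?_, integral_instanton_density hE hlam.ne' b⟩
  simp_rw [show ∀ D : ℝ, 3 * (4 * lam ^ 2 / D ^ 2) ^ 2 = 48 * (lam ^ 4 / D ^ 4) from
    fun D => by ring]
  exact integral_const_mul _ _
end
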